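/- arXiv:2206.13735 — 2 statements merged into one kernel-verified Lean document; each statement's English description precedes it below -/
import Mathlib

section
/- Let 𝔤 be a simple complex Lie algebra and θ : 𝔤 → 𝔤 an involutive Lie algebra automorphism with θ ≠ id. Let 𝔥 = {ξ ∈ 𝔤 : θ(ξ) = ξ} and 𝔳 = {η ∈ 𝔤 : θ(η) = -η}. Then 𝔥 is a Lie subalgebra of 𝔤 and the adjoint action of 𝔥 on 𝔳 is faithful, i.e. if ξ ∈ 𝔥 satisfies [ξ, η] = 0 for all η ∈ 𝔳, then ξ = 0. -/
/-!
Let `J ⊆ 𝔥` be the kernel of the adjoint action of `𝔥` on `𝔳`. Since `2` is invertible, every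
element of `𝔤` splits as `h + w` with `h ∈ 𝔥`, `w ∈ 𝔳`. Elements of `𝔳` bracket `J` to zero, and
for `h ∈ 𝔥` the Jacobi identity `[[h, x], v] = [h, [x, v]] - [x, [h, v]]` together with
`[𝔥, 𝔳] ⊆ 𝔳` shows `[h, J] ⊆ J`. So `J` is an ideal of `𝔤`; it misses any `x` with `θ x ≠ x`,
hence is a proper ideal of a simple Lie algebra, i.e. `J = 0`.
-/

theorem exists_fixed_add_antifixed {R M : Type*} [CommRing R] [Invertible (2 : R)]
    [AddCommGroup M] [Module R M] (θ : M →ₗ[R] M) (hθ : ∀ x, θ (θ x) = x) (y : M) :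
    ∃ h w, θ h = h ∧ θ w = -w ∧ h + w = y := by
  refine ⟨(⅟2 : R) • (y + θ y), (⅟2 : R) • (y - θ y), ?_, ?_, ?_⟩
  · rw [map_smul, map_add, hθ, add_comm]
  · rw [map_smul, map_sub, hθ, ← smul_neg, neg_sub]
  · rw [← smul_add, add_add_sub_cancel, ← two_smul R y, smul_smul, invOf_mul_self, one_smul]

namespace LieEquiv

variable {R L : Type*} [CommRing R] [LieRing L] [LieAlgebra R L]

def kerAdFixedOnAntifixed [Invertible (2 : R)] (θ : L ≃ₗ⁅R⁆ L) (hθ : ∀ x, θ (θ x) = x) :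
    LieIdeal R L where
  carrier := {x | θ x = x ∧ ∀ v, θ v = -v → ⁅x, v⁆ = 0}
  add_mem' := by
    rintro a b ⟨ha, hav⟩ ⟨hb, hbv⟩
    exact ⟨by rw [map_add, ha, hb], fun v hv => by rw [add_lie, hav v hv, hbv v hv, add_zero]⟩
  zero_mem' := ⟨map_zero θ, fun v _ => zero_lie v⟩
  smul_mem' := by
    rintro c x ⟨hx, hxv⟩
    exact ⟨by rw [map_smul, hx], fun v hv => by rw [smul_lie, hxv v hv, smul_zero]⟩
  lie_mem := by
    rintro y x ⟨hx, hxv⟩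
    obtain ⟨h, w, hh, hw, rfl⟩ : ∃ h w, θ h = h ∧ θ w = -w ∧ h + w = y :=
      exists_fixed_add_antifixed θ.toLinearEquiv.toLinearMap hθ y
    have hwx : ⁅w, x⁆ = 0 := by rw [← lie_skew, hxv w hw, neg_zero]
    rw [add_lie, hwx, add_zero]
    refine ⟨by rw [map_lie, hh, hx], fun v hv => ?_⟩
    have hhv : θ ⁅h, v⁆ = -⁅h, v⁆ := by rw [map_lie, hh, hv, lie_neg]
    rw [lie_lie, hxv v hv, hxv _ hhv, lie_zero, sub_zero]

theorem kerAdFixedOnAntifixed_eq_bot [Invertible (2 : R)] [LieAlgebra.IsSimple R L]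
    (θ : L ≃ₗ⁅R⁆ L) (hθ : ∀ x, θ (θ x) = x) (hne : ∃ x, θ x ≠ x) :
    kerAdFixedOnAntifixed θ hθ = ⊥ := by
  refine (LieAlgebra.IsSimple.eq_bot_or_eq_top _).resolve_right fun htop => ?_
  obtain ⟨x, hx⟩ := hne
  have hmem : x ∈ kerAdFixedOnAntifixed θ hθ := htop ▸ LieSubmodule.mem_top x
  exact hx hmem.1

end LieEquiv

theorem stmt_9_general (L : Type*) [LieRing L] [LieAlgebra ℂ L]
    [LieAlgebra.IsSimple ℂ L]
    (θ : L ≃ₗ⁅ℂ⁆ L) (hinv : ∀ x, θ (θ x) = x) (hne : ∃ x, θ x ≠ x) :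
    (∀ x y : L, θ x = x → θ y = y → θ ⁅x, y⁆ = ⁅x, y⁆) ∧
    (∀ ξ : L, θ ξ = ξ → (∀ η : L, θ η = -η → ⁅ξ, η⁆ = 0) → ξ = 0) := by
  refine ⟨fun x y hx hy => by rw [LieEquiv.map_lie, hx, hy], fun ξ hξ hcomm => ?_⟩
  have hker : ξ ∈ LieEquiv.kerAdFixedOnAntifixed θ hinv := ⟨hξ, hcomm⟩
  rwa [LieEquiv.kerAdFixedOnAntifixed_eq_bot θ hinv hne, LieSubmodule.mem_bot] at hker

/-- For a simple complex Lie algebra `L` with an involutive automorphism `θ ≠ id`,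
the fixed subspace `𝔥` is a Lie subalgebra and its adjoint action on the `(-1)`-eigenspace
`𝔳` is faithful. -/
theorem stmt_9 (L : Type*) [LieRing L] [LieAlgebra ℂ L] [FiniteDimensional ℂ L]
    [LieAlgebra.IsSimple ℂ L]
    (θ : L ≃ₗ⁅ℂ⁆ L) (hinv : ∀ x, θ (θ x) = x) (hne : ∃ x, θ x ≠ x) :
    (∀ x y : L, θ x = x → θ y = y → θ ⁅x, y⁆ = ⁅x, y⁆) ∧
    (∀ ξ : L, θ ξ = ξ → (∀ η : L, θ η = -η → ⁅ξ, η⁆ = 0) → ξ = 0) :=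
  stmt_9_general L θ hinv hne
end

section
/- Conversely, let F̄ : V⁴ → ℂ be 4-linear, symmetric in the first two arguments and symmetric in the last two arguments. If ⟨u₁,u₂⟩⟨u₃,u₄⟩F̄(a,b,c,d) + ⟨u₂,u₃⟩⟨u₁,u₄⟩F̄(b,c,a,d) + ⟨u₃,u₁⟩⟨u₂,u₄⟩F̄(c,a,b,d) = 0 holds for all u₁,u₂,u₃,u₄ ∈ ℂ² and a,b,c,d ∈ V, then F̄(a,b,c,d) = F̄(b,c,a,d) for all a,b,c,d, i.e. F̄ is invariant under cyclic permutation of its first three arguments. -/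
/-- The determinant form on ℂ². -/
noncomputable def det2 (u v : Fin 2 → ℂ) : ℂ :=
  Matrix.det (Matrix.of ![![u 0, v 0], ![u 1, v 1]])

/-- Conversely, if a form `F̄`, symmetric in its first two and in its last two arguments,
satisfies the Bianchi-type identity weighted by determinant forms on ℂ² for all
`u₁,…,u₄ ∈ ℂ²`, then it is invariant under cyclic permutation of its first three
arguments. -/
theorem stmt_17 (V : Type*) [AddCommGroup V] [Module ℂ V]
    (F : V → V → V → V → ℂ)
    (hsym12 : ∀ a b c d, F a b c d = F b a c d)
    (hsym34 : ∀ a b c d, F a b c d = F a b d c)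
    (hbian : ∀ (u₁ u₂ u₃ u₄ : Fin 2 → ℂ) (a b c d : V),
      det2 u₁ u₂ * det2 u₃ u₄ * F a b c d + det2 u₂ u₃ * det2 u₁ u₄ * F b c a d +
        det2 u₃ u₁ * det2 u₂ u₄ * F c a b d = 0) :
    ∀ a b c d : V, F a b c d = F b c a d := by
  intro a b c d
  have h := hbian ![1, 0] ![0, 1] ![1, 0] ![0, 1] a b c d
  simp [det2, Matrix.det_fin_two_of] at h
  linear_combination h
end
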